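/- Let ℋ be a finite-dimensional complex Hilbert space. Suppose μ_n (n ∈ ℕ) and μ are probability measures on the Borel σ-algebra of ℋ with ∫ μ_n(dψ)‖ψ‖² = 1 for all n, μ_n converges weakly to μ, and ∫ μ(dψ)‖ψ‖² = 1. Then the adjusted measures converge weakly: Aμ_n ⇒ Aμ, where Aν(dψ) = ‖ψ‖² ν(dψ). -/

import Mathlib

open MeasureTheory Matrix
open scoped ENNReal ComplexConjugate ComplexOrder Classical

noncomputable section

namespace GAPPaper

/-- `d`-dimensional complex Hilbert space. -/
abbrev Hsp (d : ℕ) : Type := EuclideanSpace ℂ (Fin d)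

/-- The Hilbert space `ℋ₁ ⊗ ℋ₂`. -/
abbrev Hsp2 (d₁ d₂ : ℕ) : Type := EuclideanSpace ℂ (Fin d₁ × Fin d₂)

instance (ι : Type*) : MeasurableSpace (EuclideanSpace ℂ ι) :=
  MeasurableSpace.comap (WithLp.equiv 2 (ι → ℂ)) MeasurableSpace.pi

instance (m n : Type*) (α : Type*) [MeasurableSpace α] : MeasurableSpace (Matrix m n α) :=
  MeasurableSpace.pi

/-- standard complex Gaussian on ℂ: mean 0, `E|z|² = 1`
(real and imaginary part independent real Gaussians of variance 1/2). -/
def stdCGaussian : Measure ℂ :=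
  Measure.map (fun p : ℝ × ℝ => (p.1 : ℂ) + p.2 * Complex.I)
    ((ProbabilityTheory.gaussianReal 0 (1/2)).prod (ProbabilityTheory.gaussianReal 0 (1/2)))

/-- standard complex Gaussian on `EuclideanSpace ℂ ι` (covariance = identity). -/
def stdGaussian (ι : Type*) [Fintype ι] : Measure (EuclideanSpace ℂ ι) :=
  Measure.map (⇑(WithLp.equiv 2 (ι → ℂ)).symm)
    (Measure.pi fun _ : ι => stdCGaussian)

/-- The square root of a positive semidefinite matrix (the former `Matrix.PosSemidef.sqrt`). -/
def psdSqrt {n : Type*} [Fintype n] [DecidableEq n] {A : Matrix n n ℂ} (hA : A.PosSemidef) :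
    Matrix n n ℂ :=
  hA.1.eigenvectorUnitary.1 * diagonal ((↑) ∘ Real.sqrt ∘ hA.1.eigenvalues) *
    (star hA.1.eigenvectorUnitary : Matrix n n ℂ)

/-- The Gaussian measure `G(ρ)` on `ℂ^d` with mean 0 and covariance `ρ`
(the image of the standard Gaussian under `√ρ`). -/
def gaussian {d : ℕ} (ρ : Matrix (Fin d) (Fin d) ℂ) : Measure (Hsp d) :=
  if h : ρ.PosSemidef then
    Measure.map
      (fun x => (WithLp.equiv 2 (Fin d → ℂ)).symm
        ((psdSqrt h).mulVec (WithLp.equiv 2 (Fin d → ℂ) x)))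
      (stdGaussian (Fin d))
  else 0

/-- the "adjust" operation `Aμ(dψ) = ‖ψ‖² μ(dψ)`. -/
def adjust {E : Type*} [NormedAddCommGroup E] [MeasurableSpace E] (μ : Measure E) :
    Measure E :=
  μ.withDensity fun ψ => ENNReal.ofReal (‖ψ‖ ^ 2)

/-- projection to the unit sphere, `P(ψ) = ψ/‖ψ‖` (defined as `0` at `0`). -/
def nrm {E : Type*} [NormedAddCommGroup E] [NormedSpace ℝ E] (ψ : E) : E := ‖ψ‖⁻¹ • ψ

/-- the measure `GAP(ρ) = P_*(A G(ρ))`. -/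
def GAPm {d : ℕ} (ρ : Matrix (Fin d) (Fin d) ℂ) : Measure (Hsp d) :=
  Measure.map nrm (adjust (gaussian ρ))

/-- partial inner product `⟨χ|ψ⟩ ∈ ℋ₁`, for `χ ∈ ℋ₂`, `ψ ∈ ℋ₁⊗ℋ₂`. -/
def partialInner {d₁ d₂ : ℕ} (χ : Hsp d₂) (ψ : Hsp2 d₁ d₂) : Hsp d₁ :=
  (WithLp.equiv 2 (Fin d₁ → ℂ)).symm fun i =>
    ∑ k : Fin d₂, conj (WithLp.equiv 2 (Fin d₂ → ℂ) χ k) *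
      WithLp.equiv 2 (Fin d₁ × Fin d₂ → ℂ) ψ (i, k)

/-- the distribution `μ₁^{ψ,b} = ∑_j ‖⟨b_j|ψ⟩‖² δ_{⟨b_j|ψ⟩/‖⟨b_j|ψ⟩‖}`
of the conditional wave function (a measure concentrated on `𝕊(ℋ₁)`). -/
def condMeasure {d₁ d₂ : ℕ} (ψ : Hsp2 d₁ d₂) (b : Fin d₂ → Hsp d₂) :
    Measure (Hsp d₁) :=
  ∑ j : Fin d₂, ((‖partialInner (b j) ψ‖₊ : ℝ≥0∞) ^ 2) •
    Measure.dirac (nrm (partialInner (b j) ψ))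

/-- the distribution `μ̃₁^{ψ,b} = (1/d₂) ∑_j δ_{√d₂ ⟨b_j|ψ⟩}` of the non-normalized
conditional wave function `√d₂ ⟨b_J|ψ⟩`, `J` uniform in `{1,…,d₂}`. -/
def tildeMu {d₁ d₂ : ℕ} (ψ : Hsp2 d₁ d₂) (b : Fin d₂ → Hsp d₂) :
    Measure (Hsp d₁) :=
  ((d₂ : ℝ≥0∞))⁻¹ • ∑ j : Fin d₂, Measure.dirac (Real.sqrt d₂ • partialInner (b j) ψ)

/-- the reduced density matrix `ρ₁^ψ = tr₂ |ψ⟩⟨ψ|`. -/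
def redMatrix {d₁ d₂ : ℕ} (ψ : Hsp2 d₁ d₂) : Matrix (Fin d₁) (Fin d₁) ℂ :=
  Matrix.of fun i i' =>
    ∑ k : Fin d₂, WithLp.equiv 2 (Fin d₁ × Fin d₂ → ℂ) ψ (i, k) *
      conj (WithLp.equiv 2 (Fin d₁ × Fin d₂ → ℂ) ψ (i', k))

/-- sup norm `‖f‖_∞` of a function viewed as a function on the unit sphere `𝕊(ℋ)`. -/
def sphereSup {d : ℕ} (f : Hsp d → ℝ) : ℝ :=
  ⨆ ψ : Metric.sphere (0 : Hsp d) 1, |f ψ|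

/-- sup norm `‖f‖_∞` over the whole space. -/
def supNorm {α : Type*} (f : α → ℝ) : ℝ := ⨆ x, |f x|

/-- the trace norm `‖M‖_tr = tr √(M^* M)`. -/
def traceNorm {n : Type*} [Fintype n] [DecidableEq n] (M : Matrix n n ℂ) : ℝ :=
  (psdSqrt (Matrix.posSemidef_conjTranspose_mul_self M)).trace.re

/-- partial trace over the second factor. -/
def ptrace {d₁ d₂ : ℕ} (M : Matrix (Fin d₁ × Fin d₂) (Fin d₁ × Fin d₂) ℂ) :
    Matrix (Fin d₁) (Fin d₁) ℂ :=
  Matrix.of fun i i' => ∑ k : Fin d₂, M (i, k) (i', k)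

/-- the matrix of the orthogonal projection onto a subspace `K`. -/
def projMatrix {ι : Type*} [Fintype ι] [DecidableEq ι]
    (K : Submodule ℂ (EuclideanSpace ℂ ι)) : Matrix ι ι ℂ :=
  Matrix.of fun i j =>
    (inner ℂ (EuclideanSpace.single i (1:ℂ))
      ((K.orthogonalProjectionOnto (EuclideanSpace.single j (1:ℂ)) : EuclideanSpace ℂ ι)) : ℂ)

/-- the micro-canonical density matrix `ρ_R`: `1/dim K` times the projection onto `K`. -/
def rhoR {ι : Type*} [Fintype ι] [DecidableEq ι]
    (K : Submodule ℂ (EuclideanSpace ℂ ι)) : Matrix ι ι ℂ :=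
  ((Module.finrank ℂ K : ℂ))⁻¹ • projMatrix K

/-- the normalized uniform measure `u_R` on the unit sphere of the subspace `K`
(realized as a measure on the ambient space, concentrated on `𝕊(K)`:
the image of a standard Gaussian under `x ↦ P_K x/‖P_K x‖`). -/
def uR {ι : Type*} [Fintype ι] (K : Submodule ℂ (EuclideanSpace ℂ ι)) :
    Measure (EuclideanSpace ℂ ι) :=
  Measure.map (fun x => nrm ((K.orthogonalProjectionOnto x : EuclideanSpace ℂ ι)))
    (stdGaussian ι)

/-- the normalized uniform measure on the unit sphere `𝕊(ℂ^d)`. -/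
def sphereUniform (d : ℕ) : Measure (Hsp d) :=
  Measure.map nrm (stdGaussian (Fin d))

/-- the unitary group `U(n)`. -/
abbrev UG (n : ℕ) : Type := Matrix.unitaryGroup (Fin n) ℂ

/-- `μU` is the Haar (probability) measure on the compact Polish group `U(n)`:
a left-invariant Borel probability measure (this characterizes Haar measure uniquely). -/
def IsHaar {n : ℕ} (μU : Measure (UG n)) : Prop :=
  IsProbabilityMeasure μU ∧ ∀ V : UG n, Measure.map (fun U => V * U) μU = μU

/-- the `j`-th column of a unitary matrix, as a vector in `ℂ^n`. -/
def col {n : ℕ} (U : UG n) (j : Fin n) : Hsp n :=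
  (WithLp.equiv 2 (Fin n → ℂ)).symm fun k => (U : Matrix (Fin n) (Fin n) ℂ) k j

/-- the orthonormal basis of `ℂ^n` formed by the columns of a unitary matrix; pushing
Haar measure forward along this map yields the uniform measure `u_ONB` on `ONB(ℋ₂)`. -/
def colBasis {n : ℕ} (U : UG n) : Fin n → Hsp n := fun j => col U j

/-- elementary tensor `x ⊗ y ∈ ℋ₁⊗ℋ₂`. -/
def tensor {d₁ d₂ : ℕ} (x : Hsp d₁) (y : Hsp d₂) : Hsp2 d₁ d₂ :=
  (WithLp.equiv 2 (Fin d₁ × Fin d₂ → ℂ)).symm fun p =>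
    WithLp.equiv 2 (Fin d₁ → ℂ) x p.1 * WithLp.equiv 2 (Fin d₂ → ℂ) y p.2

/-- the set `ℛ(ρ₁)` of unit vectors in `ℋ₁⊗ℋ₂` with reduced density matrix `ρ₁`. -/
def Rset (d₁ d₂ : ℕ) (ρ₁ : Matrix (Fin d₁) (Fin d₁) ℂ) : Set (Hsp2 d₁ d₂) :=
  {ψ | ‖ψ‖ = 1 ∧ redMatrix ψ = ρ₁}

/-- the uniform distribution `u_{ρ₁}` on `ℛ(ρ₁)`: the image, under the map
`{φ_i} ↦ ∑_i √p_i χ_i ⊗ φ_i` (with `{χ_i}` an eigenbasis of `ρ₁`, `p_i` the eigenvalues,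
and `{φ_i}` the first `d₁` columns of a Haar-distributed unitary `U`), of Haar measure `μU`. -/
def uRho {d₁ d₂ : ℕ} (ρ₁ : Matrix (Fin d₁) (Fin d₁) ℂ) (μU : Measure (UG d₂)) :
    Measure (Hsp2 d₁ d₂) :=
  if h : ρ₁.IsHermitian ∧ d₁ ≤ d₂ then
    Measure.map (fun U : UG d₂ =>
      ∑ i : Fin d₁, Real.sqrt (h.1.eigenvalues i) •
        tensor (h.1.eigenvectorBasis i) (col U (Fin.castLE h.2 i))) μU
  else 0

/-- `ρ` is a density matrix: positive semidefinite with trace 1. -/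
def IsDensityMatrix {d : ℕ} (ρ : Matrix (Fin d) (Fin d) ℂ) : Prop :=
  ρ.PosSemidef ∧ ρ.trace = 1

/-- the property of the threshold `D₂ = D₂(ε,δ,d₁)` asserted by Theorem 1:
for all `d₂ > D₂`, every orthonormal basis `b` of `ℋ₂`, every density matrix `ρ₁`
on `ℋ₁` and every bounded measurable `f : 𝕊(ℋ₁) → ℝ`,
`u_{ρ₁} {ψ ∈ ℛ(ρ₁) : |μ₁^{ψ,b}(f) − GAP(ρ₁)(f)| < ε ‖f‖_∞} ≥ 1 − δ`. -/
def Thm1Prop (ε δ : ℝ) (d₁ : ℕ) (D₂ : ℝ) : Prop :=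
  ∀ d₂ : ℕ, D₂ < (d₂ : ℝ) →
  ∀ b : Fin d₂ → Hsp d₂, Orthonormal ℂ b →
  ∀ ρ₁ : Matrix (Fin d₁) (Fin d₁) ℂ, IsDensityMatrix ρ₁ →
  ∀ f : Hsp d₁ → ℝ, Measurable f →
    (∃ C : ℝ, ∀ ψ ∈ Metric.sphere (0 : Hsp d₁) 1, |f ψ| ≤ C) →
  ∀ μU : Measure (UG d₂), IsHaar μU →
  ENNReal.ofReal (1 - δ) ≤
    uRho ρ₁ μU {ψ | ψ ∈ Rset d₁ d₂ ρ₁ ∧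
      |(∫ x, f x ∂condMeasure ψ b) - ∫ x, f x ∂GAPm ρ₁| < ε * sphereSup f}


section AuxAdjust

variable {E' : Type*} [NormedAddCommGroup E'] [MeasurableSpace E'] [BorelSpace E']

lemma integral_adjust (ν : Measure E') (g : E' → ℝ) :
    ∫ x, g x ∂adjust ν = ∫ x, ‖x‖ ^ 2 * g x ∂ν := by
  have h : (fun ψ : E' => ENNReal.ofReal (‖ψ‖ ^ 2)) =
      fun ψ : E' => ((‖ψ‖₊ ^ 2 : NNReal) : ℝ≥0∞) := by
    funext ψ
    rw [← ENNReal.ofReal_coe_nnreal]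
    congr 1
  rw [adjust, h, integral_withDensity_eq_integral_smul
    (by fun_prop : Measurable fun ψ : E' => ‖ψ‖₊ ^ 2)]
  refine integral_congr_ae (Filter.Eventually.of_forall fun x => ?_)
  simp [NNReal.smul_def, NNReal.coe_pow]

lemma key_bound (ν : Measure E') [IsProbabilityMeasure ν]
    (hW : (∫ ψ, ‖ψ‖ ^ 2 ∂ν) = 1)
    (f : E' → ℝ) (hf : Continuous f) (C : ℝ) (hC : ∀ x, |f x| ≤ C)
    (R : ℝ) (hR : 0 ≤ R) :
    |(∫ ψ, ‖ψ‖ ^ 2 * f ψ ∂ν) - ∫ ψ, f ψ * min (‖ψ‖ ^ 2) R ∂ν|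
      ≤ C * (1 - ∫ ψ, min (‖ψ‖ ^ 2) R ∂ν) := by
  have hWint : Integrable (fun ψ : E' => ‖ψ‖ ^ 2) ν := by
    by_contra h
    rw [integral_undef h] at hW; norm_num at hW
  have hfW : Integrable (fun ψ : E' => ‖ψ‖ ^ 2 * f ψ) ν := by
    refine (hWint.const_mul C).mono'
      ((continuous_norm.pow 2).mul hf).aestronglyMeasurable
      (Filter.Eventually.of_forall fun ψ => ?_)
    rw [Real.norm_eq_abs, abs_mul, abs_of_nonneg (by positivity : (0:ℝ) ≤ ‖ψ‖ ^ 2)]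
    have := hC ψ
    nlinarith [sq_nonneg ‖ψ‖, abs_nonneg (f ψ)]
  have hmin : Integrable (fun ψ : E' => min (‖ψ‖ ^ 2) R) ν := by
    refine (integrable_const R).mono'
      (((continuous_norm.pow 2).min continuous_const).aestronglyMeasurable)
      (Filter.Eventually.of_forall fun ψ => ?_)
    rw [Real.norm_eq_abs, abs_of_nonneg (le_min (by positivity) hR)]
    exact min_le_right _ _
  have hfmin : Integrable (fun ψ : E' => f ψ * min (‖ψ‖ ^ 2) R) ν := by
    refine (integrable_const (C * R)).mono'
      (hf.mul ((continuous_norm.pow 2).min continuous_const)).aestronglyMeasurable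
      (Filter.Eventually.of_forall fun ψ => ?_)
    rw [Real.norm_eq_abs, abs_mul, abs_of_nonneg (le_min (by positivity) hR)]
    have h1 := hC ψ
    have h2 : min (‖ψ‖ ^ 2) R ≤ R := min_le_right _ _
    have h3 : (0:ℝ) ≤ min (‖ψ‖ ^ 2) R := le_min (by positivity) hR
    nlinarith [abs_nonneg (f ψ)]
  have heq : (∫ ψ, ‖ψ‖ ^ 2 * f ψ ∂ν) - ∫ ψ, f ψ * min (‖ψ‖ ^ 2) R ∂ν
      = ∫ ψ, f ψ * (‖ψ‖ ^ 2 - min (‖ψ‖ ^ 2) R) ∂ν := by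
    rw [← integral_sub hfW hfmin]
    congr 1; funext ψ; ring
  rw [heq]
  calc |∫ ψ, f ψ * (‖ψ‖ ^ 2 - min (‖ψ‖ ^ 2) R) ∂ν|
      ≤ ∫ ψ, |f ψ * (‖ψ‖ ^ 2 - min (‖ψ‖ ^ 2) R)| ∂ν := by
        simpa only [Real.norm_eq_abs] using
          norm_integral_le_integral_norm (fun ψ => f ψ * (‖ψ‖ ^ 2 - min (‖ψ‖ ^ 2) R)) (μ := ν)
    _ ≤ ∫ ψ, C * (‖ψ‖ ^ 2 - min (‖ψ‖ ^ 2) R) ∂ν := by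
        have hintabs : Integrable (fun ψ : E' => |f ψ * (‖ψ‖ ^ 2 - min (‖ψ‖ ^ 2) R)|) ν := by
          have : Integrable (fun ψ : E' => f ψ * (‖ψ‖ ^ 2 - min (‖ψ‖ ^ 2) R)) ν := by
            refine (hfW.sub hfmin).congr (Filter.Eventually.of_forall fun ψ => ?_)
            simp only [Pi.sub_apply]
            ring
          exact this.abs
        refine integral_mono hintabs ((hWint.sub hmin).const_mul C)
          fun ψ => ?_
        rw [abs_mul, abs_of_nonneg (by simp [min_le_left] :
          (0:ℝ) ≤ ‖ψ‖ ^ 2 - min (‖ψ‖ ^ 2) R)]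
        have h1 := hC ψ
        have h2 : (0:ℝ) ≤ ‖ψ‖ ^ 2 - min (‖ψ‖ ^ 2) R := by simp [min_le_left]
        nlinarith [abs_nonneg (f ψ)]
    _ = C * (1 - ∫ ψ, min (‖ψ‖ ^ 2) R ∂ν) := by
        rw [integral_const_mul, integral_sub hWint hmin, hW]

end AuxAdjust

/-- **Lemma** (weak continuity of the adjustment map `A`): if probability measures
`μ_n` on a finite-dimensional complex Hilbert space satisfy `∫ μ_n(dψ)‖ψ‖² = 1`,
`μ_n ⇒ μ` weakly and `∫ μ(dψ)‖ψ‖² = 1`, then `Aμ_n ⇒ Aμ` weakly, where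
`Aν(dψ) = ‖ψ‖² ν(dψ)`. -/
theorem adjust_weak_continuity (E : Type*) [NormedAddCommGroup E]
    [InnerProductSpace ℂ E] [FiniteDimensional ℂ E] [MeasurableSpace E] [BorelSpace E]
    (μseq : ℕ → Measure E) (μ : Measure E)
    (hprob : ∀ n, IsProbabilityMeasure (μseq n)) (hprob' : IsProbabilityMeasure μ)
    (hmom : ∀ n, (∫ ψ, ‖ψ‖ ^ 2 ∂μseq n) = 1) (hmom' : (∫ ψ, ‖ψ‖ ^ 2 ∂μ) = 1)
    (hconv : ∀ f : E → ℝ, Continuous f → (∃ C : ℝ, ∀ x, |f x| ≤ C) →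
      Filter.Tendsto (fun n => ∫ x, f x ∂μseq n) Filter.atTop (nhds (∫ x, f x ∂μ))) :
    ∀ f : E → ℝ, Continuous f → (∃ C : ℝ, ∀ x, |f x| ≤ C) →
      Filter.Tendsto (fun n => ∫ x, f x ∂adjust (μseq n)) Filter.atTop
        (nhds (∫ x, f x ∂adjust μ)) := by
  intro f hf hfb
  obtain ⟨C0, hC0⟩ := hfb
  set C : ℝ := max C0 0 with hCdef
  have hC : ∀ x, |f x| ≤ C := fun x => (hC0 x).trans (le_max_left _ _)
  have hCpos : 0 ≤ C := le_max_right _ _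
  simp only [integral_adjust]
  have hWintμ : Integrable (fun ψ : E => ‖ψ‖ ^ 2) μ := by
    by_contra h
    rw [integral_undef h] at hmom'; norm_num at hmom'
  rw [Metric.tendsto_atTop]
  intro ε hε
  set δ : ℝ := ε / (4 * C + 4) with hδdef
  have hδ : 0 < δ := by positivity
  -- choose truncation level R
  have htend : Filter.Tendsto (fun R : ℕ => ∫ ψ, min (‖ψ‖ ^ 2) (R : ℝ) ∂μ)
      Filter.atTop (nhds 1) := by
    have h := MeasureTheory.tendsto_integral_of_dominated_convergence
      (F := fun (R : ℕ) (ψ : E) => min (‖ψ‖ ^ 2) (R : ℝ))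
      (f := fun ψ : E => ‖ψ‖ ^ 2) (bound := fun ψ : E => ‖ψ‖ ^ 2)
      (fun R => (((continuous_norm.pow 2).min continuous_const).aestronglyMeasurable))
      hWintμ
      (fun R => Filter.Eventually.of_forall fun ψ => by
        rw [Real.norm_eq_abs, abs_of_nonneg (le_min (by positivity) (Nat.cast_nonneg _))]
        exact min_le_left _ _)
      (Filter.Eventually.of_forall fun ψ => ?_)
    · rwa [hmom'] at h
    · refine Filter.Tendsto.congr' ?_ tendsto_const_nhds
      filter_upwards [Filter.eventually_ge_atTop ⌈‖ψ‖ ^ 2⌉₊] with R hR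
      exact (min_eq_left (Nat.ceil_le.mp hR)).symm
  obtain ⟨R, hR⟩ : ∃ R : ℕ, 1 - δ < ∫ ψ, min (‖ψ‖ ^ 2) (R : ℝ) ∂μ := by
    have := htend.eventually (eventually_gt_nhds (by linarith : 1 - δ < 1))
    exact this.exists
  have hRnn : (0:ℝ) ≤ (R : ℝ) := Nat.cast_nonneg _
  -- weak convergence of the truncated integrals
  have hmincont : Continuous (fun ψ : E => min (‖ψ‖ ^ 2) (R : ℝ)) :=
    (continuous_norm.pow 2).min continuous_const
  have hg := hconv (fun ψ => f ψ * min (‖ψ‖ ^ 2) (R : ℝ)) (hf.mul hmincont)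
    ⟨C * R, fun ψ => by
      rw [abs_mul, abs_of_nonneg (le_min (by positivity) hRnn)]
      have h1 := hC ψ
      have h2 : min (‖ψ‖ ^ 2) (R : ℝ) ≤ R := min_le_right _ _
      have h3 : (0:ℝ) ≤ min (‖ψ‖ ^ 2) (R : ℝ) := le_min (by positivity) hRnn
      nlinarith [abs_nonneg (f ψ)]⟩
  have hh := hconv (fun ψ => min (‖ψ‖ ^ 2) (R : ℝ)) hmincont
    ⟨R, fun ψ => by
      rw [abs_of_nonneg (le_min (by positivity) hRnn)]
      exact min_le_right _ _⟩
  have hg' := (Metric.tendsto_atTop.mp hg) (ε / 4) (by positivity)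
  have hh' := (Metric.tendsto_atTop.mp hh) δ hδ
  obtain ⟨N₁, hN₁⟩ := hg'
  obtain ⟨N₂, hN₂⟩ := hh'
  refine ⟨max N₁ N₂, fun n hn => ?_⟩
  have hn₁ := hN₁ n (le_trans (le_max_left _ _) hn)
  have hn₂ := hN₂ n (le_trans (le_max_right _ _) hn)
  rw [Real.dist_eq] at hn₁ hn₂ ⊢
  have key₁ := key_bound (μseq n) (hmom n) f hf C hC (R : ℝ) hRnn
  have key₂ := key_bound μ hmom' f hf C hC (R : ℝ) hRnn
  set an := ∫ ψ, ‖ψ‖ ^ 2 * f ψ ∂μseq n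
  set A := ∫ ψ, ‖ψ‖ ^ 2 * f ψ ∂μ
  set gn := ∫ ψ, f ψ * min (‖ψ‖ ^ 2) (R : ℝ) ∂μseq n
  set g := ∫ ψ, f ψ * min (‖ψ‖ ^ 2) (R : ℝ) ∂μ
  set hn' := ∫ ψ, min (‖ψ‖ ^ 2) (R : ℝ) ∂μseq n
  set h := ∫ ψ, min (‖ψ‖ ^ 2) (R : ℝ) ∂μ
  have e1 : |an - gn| ≤ C * (1 - hn') := key₁
  have e2 : |A - g| ≤ C * (1 - h) := key₂
  have e3 : |gn - g| < ε / 4 := hn₁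
  have e4 : |hn' - h| < δ := hn₂
  have habs : |an - A| ≤ |an - gn| + |gn - g| + |A - g| := by
    have := abs_sub_le an gn g
    have := abs_sub_le (an) (g) (A)
    calc |an - A| ≤ |an - g| + |g - A| := abs_sub_le _ _ _
      _ ≤ (|an - gn| + |gn - g|) + |A - g| := by
          rw [abs_sub_comm g A]
          exact add_le_add (abs_sub_le _ _ _) le_rfl
  have h1h : 1 - h < δ := by linarith
  have h1hn : 1 - hn' < 2 * δ := by
    have := abs_lt.mp e4
    linarith
  have hCδ : 3 * (C * δ) + ε / 4 < ε := by
    have : δ * (4 * C + 4) = ε := by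
      rw [hδdef]; field_simp
    nlinarith
  calc |an - A| ≤ |an - gn| + |gn - g| + |A - g| := habs
    _ ≤ C * (1 - hn') + |gn - g| + C * (1 - h) := by
        exact add_le_add (add_le_add e1 le_rfl) e2
    _ < C * (2 * δ) + ε / 4 + C * δ := by
        have b1 : C * (1 - hn') ≤ C * (2 * δ) := by nlinarith
        have b2 : C * (1 - h) ≤ C * δ := by nlinarith
        linarith
    _ ≤ 3 * (C * δ) + ε / 4 := by ring_nf; linarith
    _ < ε := hCδ

end GAPPaper
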